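/- arXiv:1407.8312 — 2 statements merged into one kernel-verified Lean document; each statement's English description precedes it below -/
import Mathlib

section
/- Let Π be a rectagraph. If π : Q_n → Π and θ : Q_n → Π are coverings from the n-cube with 0·π = 0·θ and e_i·π = e_i·θ for all i ≤ n (where e_i is the i-th standard basis vector), then π = θ. -/
/-- The `n`-cube: vertices are vectors in `𝔽₂ⁿ`, adjacent iff at Hamming distance 1. -/
def cube (n : ℕ) : SimpleGraph (Fin n → ZMod 2) where
  Adj x y := hammingDist x y = 1
  symm := ⟨fun x y h => by rwa [hammingDist_comm] at h⟩
  loopless := ⟨fun x h => by simp [hammingDist_self] at h⟩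

/-- A rectagraph: a connected triangle-free graph in which every 2-arc lies in a
unique quadrangle. -/
def IsRectagraph {V : Type*} (P : SimpleGraph V) : Prop :=
  P.Connected ∧ P.CliqueFree 3 ∧
    ∀ u v w : V, P.Adj v u → P.Adj v w → u ≠ w →
      ∃! x : V, x ≠ v ∧ P.Adj u x ∧ P.Adj w x

/-- `f` is a covering from `G` to `H`. -/
def IsCovering {V W : Type*} (G : SimpleGraph V) (H : SimpleGraph W)
    (f : V → W) : Prop :=
  Function.Surjective f ∧
    ∀ x : V, Set.BijOn f (G.neighborSet x) (H.neighborSet (f x))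

/-- The standard basis vector `e_i` of `𝔽₂ⁿ`. -/
def stdBasis (n : ℕ) (i : Fin n) : Fin n → ZMod 2 :=
  fun k => if k = i then 1 else 0

/-!
Induct on the Hamming weight of `x`. Weights `0` and `1` are the hypotheses. If `x` has two
nonzero coordinates `i ≠ j`, then `x + eᵢ`, `x + eᵢ + eⱼ`, `x + eⱼ` have smaller weight and,
with `x`, span a quadrangle of the cube. Both coverings send it to a quadrangle of `P` through
the common image of the 2-arc `x + eᵢ – x + eᵢ + eⱼ – x + eⱼ`; since that 2-arc lies in a
unique quadrangle, `f x = g x`.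
-/

section Covering

variable {U V : Type*} {G : SimpleGraph U} {P : SimpleGraph V} {f g : U → V}

lemma IsCovering.map_adj (hf : IsCovering G P f) {a b : U} (hab : G.Adj a b) :
    P.Adj (f a) (f b) :=
  (hf.2 a).mapsTo hab

lemma IsCovering.map_ne_of_adj (hf : IsCovering G P f) {a b c : U} (hab : G.Adj a b)
    (hac : G.Adj a c) (hbc : b ≠ c) : f b ≠ f c :=
  fun h => hbc ((hf.2 a).injOn hab hac h)

theorem IsRectagraph.eq_of_quadrangle (hP : IsRectagraph P) (hf : IsCovering G P f)
    (hg : IsCovering G P g) {x u v w : U} (hxu : G.Adj x u) (hxw : G.Adj x w)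
    (hvu : G.Adj v u) (hvw : G.Adj v w) (huw : u ≠ w) (hxv : x ≠ v)
    (hu : f u = g u) (hv : f v = g v) (hw : f w = g w) : f x = g x := by
  obtain ⟨y, -, hy⟩ := hP.2.2 (f u) (f v) (f w) (hf.map_adj hvu) (hf.map_adj hvw)
    (hf.map_ne_of_adj hxu hxw huw)
  have completes : ∀ h : U → V, IsCovering G P h → h u = f u → h v = f v → h w = f w →
      h x ≠ f v ∧ P.Adj (f u) (h x) ∧ P.Adj (f w) (h x) := by
    intro h hh hu hv hw
    rw [← hu, ← hv, ← hw]
    exact ⟨hh.map_ne_of_adj hxu.symm hvu.symm hxv, hh.map_adj hxu.symm, hh.map_adj hxw.symm⟩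
  exact (hy _ (completes f hf rfl rfl rfl)).trans
    (hy _ (completes g hg hu.symm hv.symm hw.symm)).symm

end Covering

section Cube

variable {n : ℕ}

lemma stdBasis_apply_self (i : Fin n) : stdBasis n i i = 1 := if_pos rfl

lemma stdBasis_apply_of_ne {i k : Fin n} (h : k ≠ i) : stdBasis n i k = 0 := if_neg h

lemma ZMod.eq_one_of_ne_zero_two {a : ZMod 2} (h : a ≠ 0) : a = 1 := by
  fin_cases a
  · exact absurd rfl h
  · rfl

lemma cube_adj_add_stdBasis (x : Fin n → ZMod 2) (i : Fin n) :
    (cube n).Adj x (x + stdBasis n i) := by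
  refine Finset.card_eq_one.2 ⟨i, Finset.ext fun k => ?_⟩
  by_cases hk : k = i
  · simp [hk, stdBasis_apply_self]
  · simp [hk, stdBasis_apply_of_ne hk]

lemma hammingNorm_add_stdBasis_lt {x : Fin n → ZMod 2} {i : Fin n} (hi : x i ≠ 0) :
    hammingNorm (x + stdBasis n i) < hammingNorm x := by
  refine Finset.card_lt_card ((Finset.ssubset_iff_of_subset fun k => ?_).2 ⟨i, ?_⟩)
  · by_cases hk : k = i
    · simp [hk, hi]
    · simp [stdBasis_apply_of_ne hk]
  · simp [stdBasis_apply_self, ZMod.eq_one_of_ne_zero_two hi]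
    rfl

lemma add_stdBasis_injective (x : Fin n → ZMod 2) :
    Function.Injective fun i => x + stdBasis n i := by
  intro i j h
  by_contra hij
  simpa [stdBasis_apply_self, stdBasis_apply_of_ne hij] using congrFun h i

lemma self_ne_add_stdBasis_add_stdBasis (x : Fin n → ZMod 2) {i j : Fin n} (hij : i ≠ j) :
    x ≠ x + stdBasis n i + stdBasis n j := by
  intro h
  simpa [stdBasis_apply_self, stdBasis_apply_of_ne hij] using congrFun h i

lemma eq_zero_or_eq_stdBasis_or_exists_ne (x : Fin n → ZMod 2) :
    x = 0 ∨ (∃ i, x = stdBasis n i) ∨ ∃ i j, i ≠ j ∧ x i ≠ 0 ∧ x j ≠ 0 := by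
  by_cases hx : x = 0
  · exact .inl hx
  obtain ⟨i, hi⟩ := Function.ne_iff.1 hx
  by_cases hij : ∃ j, j ≠ i ∧ x j ≠ 0
  · obtain ⟨j, hji, hj⟩ := hij
    exact .inr (.inr ⟨i, j, hji.symm, hi, hj⟩)
  push Not at hij
  refine .inr (.inl ⟨i, funext fun k => ?_⟩)
  by_cases hk : k = i
  · rw [hk, stdBasis_apply_self, ZMod.eq_one_of_ne_zero_two hi]
  · rw [stdBasis_apply_of_ne hk, hij k hk]

end Cube

theorem covering_unique_general {n : ℕ} {V : Type*}
    (P : SimpleGraph V) (hP : IsRectagraph P)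
    (f g : (Fin n → ZMod 2) → V)
    (hf : IsCovering (cube n) P f) (hg : IsCovering (cube n) P g)
    (h0 : f 0 = g 0) (he : ∀ i : Fin n, f (stdBasis n i) = g (stdBasis n i)) :
    f = g := by
  funext x
  induction hm : hammingNorm x using Nat.strong_induction_on generalizing x with
  | _ m IH =>
  have ih : ∀ y, hammingNorm y < hammingNorm x → f y = g y := fun y hy => IH _ (hm ▸ hy) y rfl
  obtain rfl | ⟨i, rfl⟩ | ⟨i, j, hij, hi, hj⟩ := eq_zero_or_eq_stdBasis_or_exists_ne x
  · exact h0
  · exact he i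
  have hj' : (x + stdBasis n i) j ≠ 0 := by
    rwa [Pi.add_apply, stdBasis_apply_of_ne hij.symm, add_zero]
  have hxi := hammingNorm_add_stdBasis_lt hi
  refine hP.eq_of_quadrangle hf hg (cube_adj_add_stdBasis x i) (cube_adj_add_stdBasis x j)
    (cube_adj_add_stdBasis _ j).symm ?_ ((add_stdBasis_injective x).ne hij)
    (self_ne_add_stdBasis_add_stdBasis x hij) (ih _ hxi)
    (ih _ ((hammingNorm_add_stdBasis_lt hj').trans hxi)) (ih _ (hammingNorm_add_stdBasis_lt hj))
  rw [add_right_comm]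
  exact (cube_adj_add_stdBasis _ i).symm

/-- Two coverings of a rectagraph by the `n`-cube agreeing at `0` and at every
standard basis vector are equal. -/
theorem covering_unique {n : ℕ} {V : Type*} [Finite V]
    (P : SimpleGraph V) (hP : IsRectagraph P)
    (f g : (Fin n → ZMod 2) → V)
    (hf : IsCovering (cube n) P f) (hg : IsCovering (cube n) P g)
    (h0 : f 0 = g 0) (he : ∀ i : Fin n, f (stdBasis n i) = g (stdBasis n i)) :
    f = g :=
  covering_unique_general P hP f g hf hg h0 he
end

section
/- Let C be a binary linear code in 𝔽₂ⁿ with minimum distance at least 7. Then in Γ(C), for any two vertices u, v at distance 2 we have |Γ₂(u) ∩ Γ(v)| = 0 (a₂ = 0), and for any two vertices at distance 3 we have exactly 3 common neighbors with the sphere of radius 2 (c₃ = 3). -/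
lemma stdBasis_add_self (n : ℕ) (i : Fin n) : stdBasis n i + stdBasis n i = 0 := by
  funext k; exact CharTwo.add_self_eq_zero _

/-- The coset graph `Γ(C)` of a binary linear code `C ≤ 𝔽₂ⁿ`: vertices are the
cosets of `C`, with `x + C` adjacent to `x + e_i + C` (when distinct). -/
def cosetGraph {n : ℕ} (C : Submodule (ZMod 2) (Fin n → ZMod 2)) :
    SimpleGraph ((Fin n → ZMod 2) ⧸ C) where
  Adj a b := a ≠ b ∧ ∃ i : Fin n, b = a + Submodule.Quotient.mk (stdBasis n i)
  symm := by
    constructor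
    rintro a b ⟨hne, i, rfl⟩
    refine ⟨hne.symm, i, ?_⟩
    rw [add_assoc, ← Submodule.Quotient.mk_add, stdBasis_add_self]
    simp
  loopless := ⟨fun a h => h.1 rfl⟩

/-- `C` has minimum distance at least `d`: every nonzero codeword has
Hamming weight at least `d`. -/
def MinDistAtLeast {n : ℕ} (C : Submodule (ZMod 2) (Fin n → ZMod 2)) (d : ℕ) : Prop :=
  ∀ c ∈ C, c ≠ 0 → d ≤ hammingNorm c

/-!
Every coset `x + C` is reached from `0 + C` by a walk along `wt x` basis vectors, and a walk of
length `ℓ` from `u` ends at `u + y + C` with `wt y ≤ ℓ`; so `dist(u, u + x + C)` is the least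
weight in the coset `x + C`. Since `C` has minimum distance at least 7, a vector of weight at most
4 is the only vector of weight at most 2 in its coset, and hence the neighbours `u + z + eᵢ + C` of
`v = u + z + C` (with `wt z = dist(u, v) ≤ 3`) lie at distance exactly `wt (z + eᵢ) = wt z ± 1`
from `u`. For `wt z = 2` this is never 2; for `wt z = 3` it is 2 exactly for the three `i` in the
support of `z`.
-/

open Submodule.Quotient
open scoped Finset

section Basis

variable {n : ℕ}

theorem stdBasis_injective : Function.Injective (stdBasis n) := by
  intro i k h
  by_contra hik
  simpa [stdBasis, hik] using congrFun h i

theorem hammingNorm_add_stdBasis (x : Fin n → ZMod 2) (i : Fin n) :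
    hammingNorm (x + stdBasis n i) =
      if x i = 0 then hammingNorm x + 1 else hammingNorm x - 1 := by
  have hoff : ∀ k ∈ ({i}ᶜ : Finset (Fin n)), (x + stdBasis n i) k = x k := fun k hk => by
    simp [stdBasis, Finset.notMem_singleton.mp (Finset.mem_compl.mp hk)]
  simp only [hammingNorm, Finset.card_filter]
  rw [Fintype.sum_eq_add_sum_compl i,
    Fintype.sum_eq_add_sum_compl i (fun k => if x k ≠ 0 then 1 else 0),
    Finset.sum_congr rfl fun k hk => by rw [hoff k hk]]
  simp only [Pi.add_apply, stdBasis]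
  generalize x i = a
  have hchar : (1 + 1 : ZMod 2) = 0 := rfl
  obtain rfl | rfl : a = 0 ∨ a = 1 := by revert a; decide
  all_goals simp [hchar, add_comm]

theorem hammingNorm_add_stdBasis_le (x : Fin n → ZMod 2) (i : Fin n) :
    hammingNorm (x + stdBasis n i) ≤ hammingNorm x + 1 := by
  rw [hammingNorm_add_stdBasis]
  split_ifs <;> omega

end Basis

section CosetGraph

variable {n : ℕ} {C : Submodule (ZMod 2) (Fin n → ZMod 2)}

theorem eq_of_mk_eq_of_hammingNorm_add_lt {d : ℕ} (hd : MinDistAtLeast C d)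
    {x y : Fin n → ZMod 2} (h : (mk x : (Fin n → ZMod 2) ⧸ C) = mk y)
    (hxy : hammingNorm x + hammingNorm y < d) : x = y := by
  by_contra hne
  have hdist := hammingDist_triangle x 0 y
  rw [hammingDist_zero_right, hammingDist_zero_left, hammingDist_eq_hammingNorm] at hdist
  have := hd _ ((Submodule.Quotient.eq' C).mp h) (neg_add_eq_zero.not.mpr hne)
  omega

theorem exists_walk_add_mk_stdBasis (w : (Fin n → ZMod 2) ⧸ C) (i : Fin n) :
    ∃ p : (cosetGraph C).Walk w (w + mk (stdBasis n i)), p.length ≤ 1 := by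
  by_cases h : w = w + mk (stdBasis n i)
  · exact ⟨SimpleGraph.Walk.nil.copy rfl h, by simp⟩
  · exact ⟨(show (cosetGraph C).Adj _ _ from ⟨h, i, rfl⟩).toWalk, by simp⟩

theorem exists_walk_add_mk (u : (Fin n → ZMod 2) ⧸ C) (x : Fin n → ZMod 2) :
    ∃ p : (cosetGraph C).Walk u (u + mk x), p.length ≤ hammingNorm x := by
  induction hx : hammingNorm x generalizing x with
  | zero =>
    obtain rfl := hammingNorm_eq_zero.mp hx
    rw [mk_zero, add_zero]
    exact ⟨.nil, le_rfl⟩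
  | succ m ih =>
    obtain ⟨i, hi⟩ : ∃ i, x i ≠ 0 := Function.ne_iff.mp (hammingNorm_ne_zero_iff.mp (by omega))
    obtain ⟨p, hp⟩ := ih (x + stdBasis n i) (by rw [hammingNorm_add_stdBasis, if_neg hi]; omega)
    obtain ⟨q, hq⟩ := exists_walk_add_mk_stdBasis (u + mk (x + stdBasis n i)) i
    have hend : u + mk (x + stdBasis n i) + mk (stdBasis n i) = u + mk x := by
      rw [add_assoc, ← mk_add, add_assoc, stdBasis_add_self, add_zero]
    refine ⟨(p.append q).copy rfl hend, ?_⟩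
    rw [SimpleGraph.Walk.length_copy, SimpleGraph.Walk.length_append]
    omega

theorem dist_add_mk_le (u : (Fin n → ZMod 2) ⧸ C) (x : Fin n → ZMod 2) :
    (cosetGraph C).dist u (u + mk x) ≤ hammingNorm x :=
  let ⟨p, hp⟩ := exists_walk_add_mk u x
  (SimpleGraph.dist_le p).trans hp

theorem exists_eq_add_mk_of_walk {u v : (Fin n → ZMod 2) ⧸ C} (p : (cosetGraph C).Walk u v) :
    ∃ x : Fin n → ZMod 2, v = u + mk x ∧ hammingNorm x ≤ p.length := by
  induction p with
  | nil => exact ⟨0, by simp, by simp⟩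
  | cons h p ih =>
    obtain ⟨x, rfl, hx⟩ := ih
    rw [SimpleGraph.Walk.length_cons]
    obtain ⟨-, i, hi⟩ := h
    refine ⟨stdBasis n i + x, by rw [hi, mk_add, add_assoc], ?_⟩
    rw [add_comm]
    exact (hammingNorm_add_stdBasis_le x i).trans (by omega)

theorem cosetGraph_connected : (cosetGraph C).Connected := by
  refine SimpleGraph.connected_iff_exists_forall_reachable _ |>.mpr ⟨0, fun v => ?_⟩
  obtain ⟨x, rfl⟩ := mk_surjective C v
  obtain ⟨p, -⟩ := exists_walk_add_mk 0 x
  exact ⟨p.copy rfl (zero_add _)⟩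

theorem exists_eq_add_mk_hammingNorm_eq_dist (u v : (Fin n → ZMod 2) ⧸ C) :
    ∃ x : Fin n → ZMod 2, v = u + mk x ∧ hammingNorm x = (cosetGraph C).dist u v := by
  obtain ⟨p, hp⟩ := (cosetGraph_connected.preconnected u v).exists_walk_length_eq_dist
  obtain ⟨x, rfl, hx⟩ := exists_eq_add_mk_of_walk p
  exact ⟨x, rfl, le_antisymm (hp ▸ hx) (dist_add_mk_le u x)⟩

theorem dist_add_mk_eq_iff {d j : ℕ} (hd : MinDistAtLeast C d) (u : (Fin n → ZMod 2) ⧸ C)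
    {x : Fin n → ZMod 2} (h : hammingNorm x + j < d) :
    (cosetGraph C).dist u (u + mk x) = j ↔ hammingNorm x = j := by
  obtain ⟨y, hy, hyd⟩ := exists_eq_add_mk_hammingNorm_eq_dist u (u + mk x)
  have hxy (hy_le : hammingNorm y ≤ j) : x = y :=
    eq_of_mk_eq_of_hammingNorm_add_lt hd (add_left_cancel hy) (by omega)
  constructor
  · intro hj
    rw [hxy (by omega), hyd, hj]
  · intro hj
    rw [← hyd, ← hxy (hj ▸ hyd ▸ dist_add_mk_le u x), hj]

theorem mk_stdBasis_ne_zero {d : ℕ} (hd : MinDistAtLeast C d) (h : 1 < d) (i : Fin n) :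
    (mk (stdBasis n i) : (Fin n → ZMod 2) ⧸ C) ≠ 0 := by
  intro h0
  have hwt : hammingNorm (stdBasis n i) = 1 := by simpa using hammingNorm_add_stdBasis 0 i
  have := eq_of_mk_eq_of_hammingNorm_add_lt hd (h0.trans (mk_zero C).symm) (by simpa [hwt])
  simp [this] at hwt

theorem setOf_dist_eq_and_adj_eq_image {d j : ℕ} (hd : MinDistAtLeast C d)
    (u : (Fin n → ZMod 2) ⧸ C) {z : Fin n → ZMod 2} (h : hammingNorm z + 1 + j < d) :
    {w | (cosetGraph C).dist u w = j ∧ (cosetGraph C).Adj (u + mk z) w} =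
      (fun i => u + mk (z + stdBasis n i)) '' {i | hammingNorm (z + stdBasis n i) = j} := by
  have hstep (i : Fin n) : u + mk z + mk (stdBasis n i) = u + mk (z + stdBasis n i) := by
    rw [mk_add, add_assoc]
  have hdist (i : Fin n) := dist_add_mk_eq_iff hd u (x := z + stdBasis n i) (j := j)
    (by have := hammingNorm_add_stdBasis_le z i; omega)
  ext w
  constructor
  · rintro ⟨hw, -, i, rfl⟩
    rw [hstep] at hw ⊢
    exact ⟨i, (hdist i).mp hw, rfl⟩
  · rintro ⟨i, hi, rfl⟩
    refine ⟨(hdist i).mpr hi, ?_, i, (hstep i).symm⟩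
    dsimp only
    rw [← hstep, ne_eq, left_eq_add]
    exact mk_stdBasis_ne_zero hd (by omega) i

theorem ncard_setOf_dist_eq_and_adj {d j : ℕ} (hd : MinDistAtLeast C d)
    (u : (Fin n → ZMod 2) ⧸ C) {z : Fin n → ZMod 2} (h : hammingNorm z + 1 + j < d) :
    {w | (cosetGraph C).dist u w = j ∧ (cosetGraph C).Adj (u + mk z) w}.ncard =
      #{i | hammingNorm (z + stdBasis n i) = j} := by
  rw [setOf_dist_eq_and_adj_eq_image hd u h, Set.InjOn.ncard_image, Set.ncard_eq_toFinset_card',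
    Set.toFinset_ofPred]
  intro i hi k hk hik
  have hj : j ≤ hammingNorm z + 1 := hi ▸ hammingNorm_add_stdBasis_le z i
  have := eq_of_mk_eq_of_hammingNorm_add_lt hd (add_left_cancel hik) (by rw [hi, hk]; omega)
  exact stdBasis_injective (add_left_cancel this)

end CosetGraph

/-- If `C` has minimum distance at least 7, then in `Γ(C)`: for any vertices
`u, v` at distance 2 there is no neighbor of `v` at distance 2 from `u`
(`a₂ = 0`), and for any vertices at distance 3 there are exactly 3 neighbors of
`v` at distance 2 from `u` (`c₃ = 3`). -/
theorem cosetGraph_a2_c3 {n : ℕ}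
    (C : Submodule (ZMod 2) (Fin n → ZMod 2)) (hd : MinDistAtLeast C 7) :
    (∀ u v : (Fin n → ZMod 2) ⧸ C, (cosetGraph C).dist u v = 2 →
      {w | (cosetGraph C).dist u w = 2 ∧ (cosetGraph C).Adj v w} = ∅) ∧
    (∀ u v : (Fin n → ZMod 2) ⧸ C, (cosetGraph C).dist u v = 3 →
      {w | (cosetGraph C).dist u w = 2 ∧ (cosetGraph C).Adj v w}.ncard = 3) := by
  refine ⟨fun u v huv => ?_, fun u v huv => ?_⟩
  · obtain ⟨z, rfl, hz⟩ := exists_eq_add_mk_hammingNorm_eq_dist u v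
    rw [setOf_dist_eq_and_adj_eq_image hd u (by omega), Set.image_eq_empty,
      Set.eq_empty_iff_forall_notMem]
    intro i (hi : hammingNorm (z + stdBasis n i) = 2)
    have := hammingNorm_add_stdBasis z i
    split_ifs at this <;> omega
  · obtain ⟨z, rfl, hz⟩ := exists_eq_add_mk_hammingNorm_eq_dist u v
    rw [ncard_setOf_dist_eq_and_adj hd u (by omega)]
    calc #{i | hammingNorm (z + stdBasis n i) = 2} = #{i | z i ≠ 0} := by
          congr 1
          refine Finset.filter_congr fun i _ => ?_
          rw [hammingNorm_add_stdBasis]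
          split_ifs <;> simp_all
      _ = 3 := hz.trans huv
end
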